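/- Let G_C be the 6-cycle on vertices 0,...,5 (edges i–(i+1 mod 6)) with additional chords (1,5) and (2,4), and let G_D be the 6-cycle with additional chords (1,4) and (2,5). Then Div(G_C) = Div(G_D) = 2/(1 + 2·exp(-1) + 2·exp(-2) + exp(-3)) + 4/(1 + 3·exp(-1) + 2·exp(-2)). -/

import Mathlib

/-- `exp(-d)` for an extended natural number distance, with `exp(-∞) = 0`. -/
noncomputable def expNeg (d : ℕ∞) : ℝ :=
  if d = ⊤ then 0 else Real.exp (-(WithTop.untopD 0 d : ℕ))

/-- The spread (structural diversity) of a finite graph with respect to its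
extended shortest-path metric. -/
noncomputable def spread {V : Type*} [Fintype V] (G : SimpleGraph V) : ℝ :=
  ∑ x, 1 / ∑ y, expNeg (G.edist x y)

/-- The 6-cycle with chords `(1,5)` and `(2,4)`. -/
def graphC : SimpleGraph (Fin 6) :=
  SimpleGraph.fromEdgeSet
    {s(0, 1), s(1, 2), s(2, 3), s(3, 4), s(4, 5), s(5, 0), s(1, 5), s(2, 4)}

/-- The 6-cycle with chords `(1,4)` and `(2,5)`. -/
def graphD : SimpleGraph (Fin 6) :=
  SimpleGraph.fromEdgeSet
    {s(0, 1), s(1, 2), s(2, 3), s(3, 4), s(4, 5), s(5, 0), s(1, 4), s(2, 5)}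

/-!
In both graphs the vertices 0 and 3 see the other vertices at distances 0, 1, 1, 2, 2, 3, and
the vertices 1, 2, 4, 5 at distances 0, 1, 1, 1, 2, 2; the spread only depends on these
distance profiles, so both spreads equal the stated value. The distance tables are certified
as in breadth-first search: a table that vanishes on the diagonal, grows by at most one along
an edge, and lets every `x ≠ y` step to a neighbour one unit closer to `y` is the graph metric.
-/

namespace SimpleGraph

variable {V : Type*} {G : SimpleGraph V} {d : V → V → ℕ}

lemma le_length_of_adj_le_succ (hself : ∀ y, d y y = 0)
    (hadj : ∀ a b y, G.Adj a b → d a y ≤ d b y + 1) {x y : V} (p : G.Walk x y) :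
    d x y ≤ p.length := by
  induction p with
  | nil => simp [hself]
  | cons h _ ih => simpa using (hadj _ _ _ h).trans (Nat.succ_le_succ ih)

lemma le_edist_of_adj_le_succ (hself : ∀ y, d y y = 0)
    (hadj : ∀ a b y, G.Adj a b → d a y ≤ d b y + 1) (x y : V) :
    (d x y : ℕ∞) ≤ G.edist x y := by
  rcases eq_or_ne (G.edist x y) ⊤ with h | h
  · simp [h]
  · obtain ⟨p, hp⟩ := G.exists_walk_of_edist_ne_top h
    rw [← hp]
    exact_mod_cast le_length_of_adj_le_succ hself hadj p

lemma edist_le_of_exists_adj_succ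
    (hstep : ∀ x y, x ≠ y → ∃ z, G.Adj x z ∧ d z y + 1 = d x y) (x y : V) :
    G.edist x y ≤ d x y := by
  induction hn : d x y using Nat.strong_induction_on generalizing x with
  | _ n ih =>
    rcases eq_or_ne x y with rfl | hne
    · simp
    obtain ⟨z, hxz, hz⟩ := hstep x y hne
    calc G.edist x y ≤ G.edist x z + G.edist z y := G.edist_triangle
      _ ≤ 1 + d z y := add_le_add (edist_eq_one_iff_adj.mpr hxz).le (ih _ (by omega) z rfl)
      _ = n := by rw [← hn, ← hz]; push_cast; ring

lemma edist_eq_of_adj_le_succ_of_exists_adj_succ (hself : ∀ y, d y y = 0)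
    (hadj : ∀ a b y, G.Adj a b → d a y ≤ d b y + 1)
    (hstep : ∀ x y, x ≠ y → ∃ z, G.Adj x z ∧ d z y + 1 = d x y) (x y : V) :
    G.edist x y = d x y :=
  le_antisymm (edist_le_of_exists_adj_succ hstep x y) (le_edist_of_adj_le_succ hself hadj x y)

end SimpleGraph

lemma expNeg_natCast (n : ℕ) : expNeg n = Real.exp (-n) := by
  simp [expNeg]

lemma spread_eq_of_edist_eq {V : Type*} [Fintype V] {G : SimpleGraph V} {d : V → V → ℕ}
    (h : ∀ x y, G.edist x y = d x y) :
    spread G = ∑ x, 1 / ∑ y, Real.exp (-(d x y)) := by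
  simp [spread, h, expNeg_natCast]

lemma graphC_adj_iff (x y : Fin 6) : graphC.Adj x y ↔ x ≠ y ∧
    s(x, y) ∈ ({s(0, 1), s(1, 2), s(2, 3), s(3, 4), s(4, 5), s(5, 0), s(1, 5), s(2, 4)} :
      Finset (Sym2 (Fin 6))) := by
  simp [graphC, and_comm]

lemma graphD_adj_iff (x y : Fin 6) : graphD.Adj x y ↔ x ≠ y ∧
    s(x, y) ∈ ({s(0, 1), s(1, 2), s(2, 3), s(3, 4), s(4, 5), s(5, 0), s(1, 4), s(2, 5)} :
      Finset (Sym2 (Fin 6))) := by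
  simp [graphD, and_comm]

instance decidableRelAdjGraphC : DecidableRel graphC.Adj :=
  fun x y => decidable_of_iff _ (graphC_adj_iff x y).symm

instance decidableRelAdjGraphD : DecidableRel graphD.Adj :=
  fun x y => decidable_of_iff _ (graphD_adj_iff x y).symm

def distC : Fin 6 → Fin 6 → ℕ :=
  ![![0, 1, 2, 3, 2, 1], ![1, 0, 1, 2, 2, 1], ![2, 1, 0, 1, 1, 2],
    ![3, 2, 1, 0, 1, 2], ![2, 2, 1, 1, 0, 1], ![1, 1, 2, 2, 1, 0]]

def distD : Fin 6 → Fin 6 → ℕ :=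
  ![![0, 1, 2, 3, 2, 1], ![1, 0, 1, 2, 1, 2], ![2, 1, 0, 1, 2, 1],
    ![3, 2, 1, 0, 1, 2], ![2, 1, 2, 1, 0, 1], ![1, 2, 1, 2, 1, 0]]

lemma graphC_edist (x y : Fin 6) : graphC.edist x y = distC x y :=
  SimpleGraph.edist_eq_of_adj_le_succ_of_exists_adj_succ (by decide) (by decide) (by decide) x y

lemma graphD_edist (x y : Fin 6) : graphD.edist x y = distD x y :=
  SimpleGraph.edist_eq_of_adj_le_succ_of_exists_adj_succ (by decide) (by decide) (by decide) x y

/-- Both chorded 6-cycles have the same spread. -/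
theorem spread_graphC_eq_spread_graphD :
    spread graphC =
      2 / (1 + 2 * Real.exp (-1) + 2 * Real.exp (-2) + Real.exp (-3)) +
        4 / (1 + 3 * Real.exp (-1) + 2 * Real.exp (-2)) ∧
    spread graphD =
      2 / (1 + 2 * Real.exp (-1) + 2 * Real.exp (-2) + Real.exp (-3)) +
        4 / (1 + 3 * Real.exp (-1) + 2 * Real.exp (-2)) := by
  rw [spread_eq_of_edist_eq graphC_edist, spread_eq_of_edist_eq graphD_edist]
  constructor <;>
  · simp only [distC, distD, Fin.sum_univ_six, Matrix.cons_val', Matrix.cons_val_fin_one,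
      Matrix.cons_val_zero, Matrix.cons_val_one, Matrix.cons_val, Nat.cast_zero, Nat.cast_one,
      Nat.cast_ofNat, neg_zero, Real.exp_zero]
    ring
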